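/- arXiv:2102.01440 — 2 statements merged into one kernel-verified Lean document; each statement's English description precedes it below -/
import Mathlib

section
/- Let J = (V, D, H) be a weakly winning justification for a parity game PG and let v be a node. Then every play of the parametrized parity game PG_{P_J} starting in v that is consistent with the strategy σ_{J,H(v)} is a path in D. -/
attribute [local instance] Classical.propDecidable

noncomputable section

/-- A parity game: an edge relation `E`, an owner function, a priority
function; every node has at least one outgoing edge. -/
structure ParityGame (V : Type*) where
  E : V → V → Prop
  owner : V → Fin 2
  pr : V → ℕ
  exists_succ : ∀ v, ∃ w, E v w

namespace ParityGame

variable {V : Type*}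

/-- An infinite sequence of nodes following the relation `R`. -/
def IsInfPath (R : V → V → Prop) (π : ℕ → V) : Prop :=
  ∀ i, R (π i) (π (i + 1))

/-- `ρ 0, …, ρ n` is a finite sequence of nodes following `R`. -/
def IsFinPath (R : V → V → Prop) (ρ : ℕ → V) (n : ℕ) : Prop :=
  ∀ i < n, R (ρ i) (ρ (i + 1))

/-- A cycle following `R`: a nonempty finite path ending in its starting node. -/
def IsCycle (R : V → V → Prop) (ρ : ℕ → V) (n : ℕ) : Prop :=
  0 < n ∧ IsFinPath R ρ n ∧ ρ n = ρ 0

/-- `w` is reachable from `v` following `R` (in zero or more steps). -/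
def Reaches (R : V → V → Prop) (v w : V) : Prop :=
  Relation.ReflTransGen R v w

/-- The infinite play `π` is won by player `α`: the highest priority
occurring infinitely often in the play has parity `α`. -/
def InfWonBy (G : ParityGame V) (π : ℕ → V) (α : Fin 2) : Prop :=
  ∃ p : ℕ, {i | G.pr (π i) = p}.Infinite ∧
    (∀ q : ℕ, {i | G.pr (π i) = q}.Infinite → q ≤ p) ∧ Fin.ofNat 2 p = α

/-- A play is consistent with a (partial, memoryless) strategy given as a set
of edges: whenever the play is at a node where the strategy selects an edge,
the play follows that edge. -/
def Consistent (σ : V → V → Prop) (π : ℕ → V) : Prop :=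
  ∀ i u, σ (π i) u → π (i + 1) = u

/-- Consistency of a finite play `ρ 0, …, ρ n` with a strategy. -/
def ConsistentFin (σ : V → V → Prop) (ρ : ℕ → V) (n : ℕ) : Prop :=
  ∀ i < n, ∀ u, σ (ρ i) u → ρ (i + 1) = u

/-- The default hypothesis: each node is won by the parity of its priority. -/
def Hd (G : ParityGame V) (v : V) : Fin 2 := Fin.ofNat 2 (G.pr v)

/-- `dj` is a direct justification for player `α` to win node `v`: a set
containing exactly one outgoing edge of `v` if `α` owns `v`, and all outgoing
edges of `v` otherwise. -/
def IsDJ (G : ParityGame V) (v : V) (α : Fin 2) (dj : Set (V × V)) : Prop :=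
  (G.owner v = α → ∃ w, G.E v w ∧ dj = {(v, w)}) ∧
  (G.owner v ≠ α → dj = {p | p.1 = v ∧ G.E v p.2})

/-- `dj` wins `v` for `α` under hypothesis `H`. -/
def WinsDJ (G : ParityGame V) (H : V → Fin 2) (v : V) (α : Fin 2)
    (dj : Set (V × V)) : Prop :=
  G.IsDJ v α dj ∧ ∀ p ∈ dj, H p.2 = α

/-- The parity game obtained from `G` and the parameter function `P` by
replacing, in every parameter `v`, the outgoing edges of `v` by the self-loop
`(v, v)` and the priority of `v` by its assigned winner `P v`. -/
def paramGame (G : ParityGame V) (P : V → Option (Fin 2)) : ParityGame V where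
  E := fun v w => if P v = none then G.E v w else w = v
  owner := G.owner
  pr := fun v => (P v).elim (G.pr v) Fin.val
  exists_succ := fun v => by
    by_cases h : P v = none
    · obtain ⟨w, hw⟩ := G.exists_succ v
      exact ⟨w, by simp [h, hw]⟩
    · exact ⟨v, by simp [h]⟩

/-- A justification for `G`: a subgraph `D` together with a hypothesis `H`. -/
structure Justification (G : ParityGame V) where
  D : V → V → Prop
  H : V → Fin 2

variable {G : ParityGame V}

namespace Justification

/-- `v` is justified in `J`: it has an outgoing edge in `D`. -/
def Justified (J : Justification G) (v : V) : Prop := ∃ w, J.D v w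

/-- The set of outgoing edges of `v` in `D`. -/
def outEdges (J : Justification G) (v : V) : Set (V × V) :=
  {p | p.1 = v ∧ J.D v p.2}

/-- `J` is weakly winning: the outgoing edges of every justified node `v`
form a direct justification winning `v` for `H v` under `H`. -/
def WeaklyWinning (J : Justification G) : Prop :=
  ∀ v, J.Justified v → G.WinsDJ J.H v (J.H v) (J.outEdges v)

/-- `J` is winning: weakly winning, and every infinite path in `D` is a play
of `G` won by the hypothetical winner of its nodes. -/
def Winning (J : Justification G) : Prop :=
  J.WeaklyWinning ∧
    ∀ π : ℕ → V, IsInfPath J.D π → G.InfWonBy π (J.H (π 0))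

/-- The parameter function `P_J`: the restriction of `H` to the unjustified
nodes of `J`. -/
def param (J : Justification G) (v : V) : Option (Fin 2) :=
  if J.Justified v then none else some (J.H v)

/-- The strategy `σ_{J,α}`: the set of edges `(v, w) ∈ D` with
`O v = H v = α`. -/
def strat (J : Justification G) (α : Fin 2) : V → V → Prop :=
  fun v w => J.D v w ∧ G.owner v = α ∧ J.H v = α

/-- `Par_J v`: the parameters (unjustified nodes) reachable from `v` in `D`. -/
def Par (J : Justification G) (v : V) : Set V :=
  {w | Reaches J.D v w ∧ ¬ J.Justified w}

/-- The justification level of `v`: the minimal priority of a parameter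
reachable from `v`, and `⊤` (`+∞`) if there is none. -/
def jl (J : Justification G) (v : V) : ℕ∞ :=
  sInf ((fun w => (G.pr w : ℕ∞)) '' J.Par v)

/-- The justification level of a direct justification: the minimum of the
justification levels of the targets of its edges. -/
def jlDJ (J : Justification G) (dj : Set (V × V)) : ℕ∞ :=
  sInf ((fun p : V × V => J.jl p.2) '' dj)

/-- `J` is safe: winning, unjustified nodes have their default winner as
hypothesis, and the justification level of every node is at least its
priority. -/
def Safe (J : Justification G) : Prop :=
  J.Winning ∧ (∀ v, ¬ J.Justified v → J.H v = G.Hd v) ∧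
    ∀ v, (G.pr v : ℕ∞) ≤ J.jl v

/-- `J[v : dj, α]`: replace the outgoing `D`-edges of `v` by `dj` and set
`H v := α`. -/
def update (J : Justification G) (v : V) (dj : Set (V × V)) (α : Fin 2) :
    Justification G where
  D := fun x y => if x = v then (x, y) ∈ dj else J.D x y
  H := fun x => if x = v then α else J.H x

/-- `J[v : ∅, Hf v | v ∈ S]`: remove the direct justification of every
`v ∈ S` and set `H v := Hf v`. -/
def resetAll (J : Justification G) (S : Set V) (Hf : V → Fin 2) :
    Justification G where
  D := fun x y => if x ∈ S then False else J.D x y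
  H := fun x => if x ∈ S then Hf x else J.H x

/-- `s_i(J)`: the number of justified nodes of justification level `i`. -/
def size (J : Justification G) (i : ℕ∞) : ℕ :=
  {v | J.Justified v ∧ J.jl v = i}.ncard

end Justification

/-- The preconditions of the operation `Justify(J, v, dj)`. -/
def Executable (G : ParityGame V) (J : Justification G) (v : V)
    (dj : Set (V × V)) : Prop :=
  J.Safe ∧ (∃ α, G.WinsDJ J.H v α dj) ∧
    (if J.Justified v then J.jl v < J.jlDJ dj else J.jl v ≤ J.jlDJ dj)

/-- The operation `Justify(J, v, dj)`, where `α` is the player winning `v`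
by `dj`: if `H v = α` this is `J[v : dj, α]`; otherwise all nodes reaching
`v` in `D` are reset to their default winner and then `v` gets `dj`. -/
def justify (G : ParityGame V) (J : Justification G) (v : V)
    (dj : Set (V × V)) (α : Fin 2) : Justification G :=
  if J.H v = α then J.update v dj α
  else (J.resetAll {w | Reaches J.D w v} G.Hd).update v dj α

/-- The empty justification `(V, ∅, H_d)`. -/
def Justification.empty (G : ParityGame V) : Justification G :=
  ⟨fun _ _ => False, G.Hd⟩

namespace Justification

variable {J : Justification G}

theorem justified_of_param_eq_none {v : V} (h : J.param v = none) : J.Justified v := by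
  by_contra hv
  simp [param, hv] at h

/-- If `α` owns `u`, the consistent move is the unique `D`-edge of `u`; otherwise every
`E`-edge of `u` is in `D`. Either way its target has hypothesis `α`. -/
theorem WeaklyWinning.consistent_step (hJ : J.WeaklyWinning) {α : Fin 2} {u w : V}
    (hu : J.Justified u) (hH : J.H u = α) (hE : G.E u w)
    (hcons : ∀ x, J.strat α u x → w = x) : J.D u w ∧ J.H w = α := by
  obtain ⟨⟨hown, hopp⟩, hwins⟩ := hJ u hu
  suffices hmem : (u, w) ∈ J.outEdges u from ⟨hmem.2, (hwins _ hmem).trans hH⟩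
  by_cases ho : G.owner u = J.H u
  · obtain ⟨w', -, hdj⟩ := hown ho
    have hw' : (u, w') ∈ J.outEdges u := hdj ▸ rfl
    rwa [hcons w' ⟨hw'.2, hH ▸ ho, hH⟩]
  · rw [hopp ho]
    exact ⟨rfl, hE⟩

theorem WeaklyWinning.isFinPath_D (hJ : J.WeaklyWinning) {ρ : ℕ → V} {n : ℕ}
    (hjust : ∀ i < n, J.Justified (ρ i)) (hE : IsFinPath G.E ρ n)
    (hcons : ConsistentFin (J.strat (J.H (ρ 0))) ρ n) : IsFinPath J.D ρ n := by
  have step (i : ℕ) (hi : i < n) (hH : J.H (ρ i) = J.H (ρ 0)) :=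
    hJ.consistent_step (hjust i hi) hH (hE i hi) (hcons i hi)
  have hH : ∀ i ≤ n, J.H (ρ i) = J.H (ρ 0) := by
    intro i
    induction i with
    | zero => exact fun _ => rfl
    | succ i ih => exact fun hi => (step i hi (ih (Nat.le_of_succ_le hi))).2
  exact fun i hi => (step i hi (hH i hi.le)).1

end Justification

theorem stmt_4_general {V : Type*} {G : ParityGame V}
    (J : Justification G) (hJ : J.WeaklyWinning) (v : V) :
    (∀ π : ℕ → V, π 0 = v → IsInfPath G.E π → (∀ i, J.param (π i) = none) →
      Consistent (J.strat (J.H v)) π → IsInfPath J.D π) ∧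
    (∀ (ρ : ℕ → V) (n : ℕ), ρ 0 = v → IsFinPath G.E ρ n →
      (∀ i < n, J.param (ρ i) = none) → (J.param (ρ n)).isSome →
      ConsistentFin (J.strat (J.H v)) ρ n → IsFinPath J.D ρ n) := by
  constructor
  · rintro π rfl hE hparam hcons i
    exact hJ.isFinPath_D (n := i + 1)
      (fun j _ => Justification.justified_of_param_eq_none (hparam j))
      (fun j _ => hE j) (fun j _ => hcons j) i i.lt_succ_self
  · rintro ρ n rfl hE hparam - hcons
    exact hJ.isFinPath_D
      (fun i hi => Justification.justified_of_param_eq_none (hparam i hi)) hE hcons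

/-- for a weakly winning justification `J` and node `v`, every
(infinite or finite) play of the parametrized parity game `PG_{P_J}` starting
in `v` and consistent with the strategy `σ_{J, H v}` is a path in `D`. -/
theorem stmt_4 {V : Type*} [Fintype V] {G : ParityGame V}
    (J : Justification G) (hJ : J.WeaklyWinning) (v : V) :
    (∀ π : ℕ → V, π 0 = v → IsInfPath G.E π → (∀ i, J.param (π i) = none) →
      Consistent (J.strat (J.H v)) π → IsInfPath J.D π) ∧
    (∀ (ρ : ℕ → V) (n : ℕ), ρ 0 = v → IsFinPath G.E ρ n →
      (∀ i < n, J.param (ρ i) = none) → (J.param (ρ n)).isSome →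
      ConsistentFin (J.strat (J.H v)) ρ n → IsFinPath J.D ρ n) :=
  stmt_4_general J hJ v

end ParityGame

end
end

section
/- Let J = (V, D, H) be a weakly winning justification, v a node with H(v) = α, and dj a direct justification that wins v for α under H. Then J' = J[v : dj, α] is weakly winning. Moreover, if (v, v) ∉ dj and no node w with (v, w) ∈ dj can reach v in J, then every cycle of J' is a cycle of J; otherwise every cycle of J' that is not a cycle of J passes through v and contains at least one edge of dj. -/
attribute [local instance] Classical.propDecidable

noncomputable section

namespace ParityGame

variable {V : Type*}

variable {G : ParityGame V}

/-!
`J[v : dj, α]` differs from `J` only in the edges out of `v` and, since `H v = α`, not at all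
in its hypothesis; so weak winningness is only at stake at `v`, where it is the assumption on `dj`.
A cycle of the new graph that avoids `v` is a cycle of `J`. A cycle through `v` leaves it by an
edge `(v, w) ∈ dj`, and following the cycle from `w` up to its next visit of `v` uses only
edges of `J`, so `w` reaches `v` in `J`.
-/

section Cycles

variable {R R' : V → V → Prop} {v : V} {ρ : ℕ → V}

lemma reflTransGen_or_of_path (hR : ∀ x y, x ≠ v → R' x y → R x y) {a b : ℕ}
    (hab : a ≤ b) (hpath : ∀ i, a ≤ i → i < b → R' (ρ i) (ρ (i + 1))) :
    Relation.ReflTransGen R (ρ a) v ∨ Relation.ReflTransGen R (ρ a) (ρ b) := by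
  induction b, hab using Nat.le_induction with
  | base => exact .inr .refl
  | succ b hab ih =>
    obtain hv | hb := ih fun i hi hib => hpath i hi (by omega)
    · exact .inl hv
    · by_cases hbv : ρ b = v
      · exact .inl (hbv ▸ hb)
      · exact .inr (hb.tail (hR _ _ hbv (hpath b hab (by omega))))

lemma reflTransGen_of_isCycle (hR : ∀ x y, x ≠ v → R' x y → R x y) {n i : ℕ}
    (hρ : IsCycle R' ρ n) (hi : i < n) (hiv : ρ i = v) :
    Relation.ReflTransGen R (ρ (i + 1)) v := by
  obtain ⟨-, hpath, hend⟩ := hρ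
  have hρ0 : Relation.ReflTransGen R (ρ 0) v := by
    obtain h | h := reflTransGen_or_of_path hR (Nat.zero_le i)
      fun j _ hj => hpath j (by omega)
    exacts [h, hiv ▸ h]
  obtain h | h := reflTransGen_or_of_path hR hi fun j _ hj => hpath j hj
  exacts [h, h.trans (hend ▸ hρ0)]

lemma isCycle_of_forall_ne (hR : ∀ x y, x ≠ v → R' x y → R x y) {n : ℕ}
    (hρ : IsCycle R' ρ n) (hv : ∀ i < n, ρ i ≠ v) : IsCycle R ρ n :=
  ⟨hρ.1, fun i hi => hR _ _ (hv i hi) (hρ.2.1 i hi), hρ.2.2⟩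

end Cycles

lemma IsDJ.fst_eq {v : V} {α : Fin 2} {dj : Set (V × V)} (h : G.IsDJ v α dj)
    {p : V × V} (hp : p ∈ dj) : p.1 = v := by
  by_cases ho : G.owner v = α
  · obtain ⟨w, -, rfl⟩ := h.1 ho
    rw [Set.mem_singleton_iff.mp hp]
  · rw [h.2 ho] at hp
    exact hp.1

namespace Justification

variable {J : Justification G} {v : V} {dj : Set (V × V)} {α : Fin 2}

lemma update_D_self : (J.update v dj α).D v = fun y => (v, y) ∈ dj := by
  simp [update]

lemma update_D_of_ne {x : V} (hx : x ≠ v) : (J.update v dj α).D x = J.D x := by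
  simp [update, hx]

lemma update_H_of_eq (hHv : J.H v = α) : (J.update v dj α).H = J.H := by
  funext x
  by_cases hx : x = v
  · simp [update, hx, hHv]
  · simp [update, hx]

lemma outEdges_update_self (hdj : ∀ p ∈ dj, p.1 = v) :
    (J.update v dj α).outEdges v = dj := by
  ext ⟨x, y⟩
  simp only [outEdges, update_D_self, Set.mem_ofPred_eq]
  constructor
  · rintro ⟨rfl, h⟩
    exact h
  · intro h
    obtain rfl : x = v := hdj _ h
    exact ⟨rfl, h⟩

lemma outEdges_update_of_ne {x : V} (hx : x ≠ v) :
    (J.update v dj α).outEdges x = J.outEdges x := by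
  simp [outEdges, update_D_of_ne hx]

lemma WeaklyWinning.update (hJ : J.WeaklyWinning) (hHv : J.H v = α)
    (hwin : G.WinsDJ J.H v α dj) : (J.update v dj α).WeaklyWinning := by
  intro x hx
  rw [update_H_of_eq hHv]
  by_cases hxv : x = v
  · subst hxv
    rw [outEdges_update_self fun p => hwin.1.fst_eq, hHv]
    exact hwin
  · rw [outEdges_update_of_ne hxv]
    obtain ⟨y, hy⟩ := hx
    exact hJ x ⟨y, by rwa [update_D_of_ne hxv] at hy⟩

end Justification

theorem stmt_8_general {V : Type*} {G : ParityGame V}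
    (J : Justification G) (hJ : J.WeaklyWinning) (v : V) (α : Fin 2)
    (dj : Set (V × V)) (hHv : J.H v = α) (hwin : G.WinsDJ J.H v α dj) :
    (J.update v dj α).WeaklyWinning ∧
    (((v, v) ∉ dj ∧ ∀ w, (v, w) ∈ dj → ¬ Reaches J.D w v) →
      ∀ (ρ : ℕ → V) (n : ℕ), IsCycle (J.update v dj α).D ρ n →
        IsCycle J.D ρ n) ∧
    (∀ (ρ : ℕ → V) (n : ℕ), IsCycle (J.update v dj α).D ρ n →
      ¬ IsCycle J.D ρ n →
      (∃ i < n, ρ i = v) ∧ ∃ i < n, (ρ i, ρ (i + 1)) ∈ dj) := by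
  have hD : ∀ x y, x ≠ v → (J.update v dj α).D x y → J.D x y := fun x y hx h => by
    rwa [Justification.update_D_of_ne hx] at h
  have hdj : ∀ {ρ : ℕ → V} {n i : ℕ}, IsCycle (J.update v dj α).D ρ n → i < n →
      ρ i = v → (v, ρ (i + 1)) ∈ dj := fun hρ hi hiv => by
    have h := hρ.2.1 _ hi
    rwa [hiv, Justification.update_D_self] at h
  refine ⟨hJ.update hHv hwin, fun hcond ρ n hρ => ?_, fun ρ n hρ hnot => ?_⟩
  · refine isCycle_of_forall_ne hD hρ fun i hi hiv => ?_
    exact hcond.2 _ (hdj hρ hi hiv) (reflTransGen_of_isCycle hD hρ hi hiv)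
  · obtain ⟨i, hi, hiv⟩ : ∃ i < n, ρ i = v := by
      by_contra! hne
      exact hnot (isCycle_of_forall_ne hD hρ hne)
    exact ⟨⟨i, hi, hiv⟩, i, hi, hiv ▸ hdj hρ hi hiv⟩

/-- if `J` is weakly winning, `H v = α` and `dj` wins `v` for
`α` under `H`, then `J' = J[v : dj, α]` is weakly winning; if `(v,v) ∉ dj`
and no target of `dj` reaches `v` in `J`, every cycle of `J'` is a cycle of
`J`; and every new cycle of `J'` passes through `v` and contains an edge of
`dj`. -/
theorem stmt_8 {V : Type*} [Fintype V] {G : ParityGame V}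
    (J : Justification G) (hJ : J.WeaklyWinning) (v : V) (α : Fin 2)
    (dj : Set (V × V)) (hHv : J.H v = α) (hwin : G.WinsDJ J.H v α dj) :
    (J.update v dj α).WeaklyWinning ∧
    (((v, v) ∉ dj ∧ ∀ w, (v, w) ∈ dj → ¬ Reaches J.D w v) →
      ∀ (ρ : ℕ → V) (n : ℕ), IsCycle (J.update v dj α).D ρ n →
        IsCycle J.D ρ n) ∧
    (∀ (ρ : ℕ → V) (n : ℕ), IsCycle (J.update v dj α).D ρ n →
      ¬ IsCycle J.D ρ n →
      (∃ i < n, ρ i = v) ∧ ∃ i < n, (ρ i, ρ (i + 1)) ∈ dj) :=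
  stmt_8_general J hJ v α dj hHv hwin

end ParityGame

end
end
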